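/- For H ≠ 1/2, the function f_H(x) = e^{-x}(Γ(2H) - ∫₀ˣ e^{s} s^{2H-1} ds) + e^{x}(Γ(2H) - ∫₀ˣ e^{-s} s^{2H-1} ds) satisfies f_H(x) ~ 2(2H-1) x^{2H-2} as x → +∞, i.e., f_H(x)/(2(2H-1)x^{2H-2}) → 1. -/

import Mathlib

/-! Write `b = 2H - 1`. Integrating by parts twice,
`e^x ∫_x^∞ e^{-s} s^b ds = x^b + b x^{b-1} + b(b-1) e^x ∫_x^∞ e^{-s} s^{b-2} ds` and
`e^{-x} ∫_1^x e^s s^b ds = x^b - b x^{b-1} + b(b-1) e^{-x} ∫_1^x e^s s^{b-2} ds + O(e^{-x})`,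
so the `x^b` terms cancel in `f_H` and `2b x^{b-1}` is left. Since `b - 2 ≤ 0`, both remainders
are `O(x^{b-2})`: on `(x, ∞)` bound `s^{b-2}` by `x^{b-2}`, and split `(1, x)` at `x / 2`. -/

open MeasureTheory Filter Real Set Asymptotics

theorem integrableOn_exp_neg_mul_rpow_Ioi (b : ℝ) {x : ℝ} (hx : 0 < x) :
    IntegrableOn (fun s => exp (-s) * s ^ b) (Ioi x) := by
  refine integrable_of_isBigO_exp_neg (b := 1 / 2) (by norm_num) ?_ ?_
  · exact continuous_exp.comp continuous_neg |>.continuousOn.mul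
      fun s hs => (continuousAt_rpow_const s b (Or.inl (hx.trans_le hs).ne')).continuousWithinAt
  · refine ((isBigO_refl (fun s => exp (-s)) atTop).mul
      (isLittleO_rpow_exp_pos_mul_atTop b (by norm_num : (0 : ℝ) < 1 / 2)).isBigO).congr_right
        fun s => ?_
    rw [← exp_add]; ring_nf

theorem integral_Ioi_exp_neg_mul_rpow (b : ℝ) {x : ℝ} (hx : 0 < x) :
    ∫ s in Ioi x, exp (-s) * s ^ b =
      exp (-x) * (x ^ b + b * x ^ (b - 1)) +
        b * (b - 1) * ∫ s in Ioi x, exp (-s) * s ^ (b - 2) := by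
  have hderiv : ∀ t, 0 < t → HasDerivAt (fun t => -(exp (-t) * (t ^ b + b * t ^ (b - 1))))
      (exp (-t) * t ^ b - b * (b - 1) * (exp (-t) * t ^ (b - 2))) t := by
    intro t ht
    have h := (hasDerivAt_rpow_const (p := b) (Or.inl ht.ne')).fun_add
      ((hasDerivAt_rpow_const (p := b - 1) (Or.inl ht.ne')).const_mul b)
    refine ((hasDerivAt_neg t).exp.fun_mul h).fun_neg.congr_deriv ?_
    rw [show b - 1 - 1 = b - 2 by ring]; ring
  have hlim : Tendsto (fun t => -(exp (-t) * (t ^ b + b * t ^ (b - 1)))) atTop (nhds 0) := by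
    have h := ((tendsto_rpow_mul_exp_neg_mul_atTop_nhds_zero b 1 one_pos).add
      ((tendsto_rpow_mul_exp_neg_mul_atTop_nhds_zero (b - 1) 1 one_pos).const_mul b)).neg
    simp only [neg_one_mul, mul_zero, add_zero, neg_zero] at h
    exact h.congr fun t => by ring
  have hint := integrableOn_exp_neg_mul_rpow_Ioi b hx
  have hint₂ := (integrableOn_exp_neg_mul_rpow_Ioi (b - 2) hx).const_mul (b * (b - 1))
  have h := integral_Ioi_of_hasDerivAt_of_tendsto (hderiv x hx).continuousAt.continuousWithinAt
    (fun t ht => hderiv t (hx.trans ht)) (hint.sub hint₂) hlim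
  rw [integral_sub hint hint₂, integral_const_mul] at h
  linarith

theorem intervalIntegrable_exp_mul_rpow (b : ℝ) {u v : ℝ} (hu : 0 < u) (hv : 0 < v) :
    IntervalIntegrable (fun s => exp s * s ^ b) volume u v :=
  ContinuousOn.intervalIntegrable fun s hs => continuous_exp.continuousAt.continuousWithinAt.mul
    (continuousAt_rpow_const s b
      (Or.inl (lt_of_lt_of_le (lt_min hu hv) hs.1).ne')).continuousWithinAt

theorem intervalIntegral_exp_mul_rpow (b : ℝ) {u x : ℝ} (hu : 0 < u) (hx : 0 < x) :
    ∫ s in u..x, exp s * s ^ b =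
      exp x * (x ^ b - b * x ^ (b - 1)) - exp u * (u ^ b - b * u ^ (b - 1)) +
        b * (b - 1) * ∫ s in u..x, exp s * s ^ (b - 2) := by
  have hpos : ∀ t ∈ uIcc u x, 0 < t := fun t ht => lt_of_lt_of_le (lt_min hu hx) ht.1
  have hderiv : ∀ t ∈ uIcc u x, HasDerivAt (fun t => exp t * (t ^ b - b * t ^ (b - 1)))
      (exp t * t ^ b - b * (b - 1) * (exp t * t ^ (b - 2))) t := by
    intro t ht
    have h := (hasDerivAt_rpow_const (p := b) (Or.inl (hpos t ht).ne')).fun_sub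
      ((hasDerivAt_rpow_const (p := b - 1) (Or.inl (hpos t ht).ne')).const_mul b)
    refine ((hasDerivAt_exp t).fun_mul h).congr_deriv ?_
    rw [show b - 1 - 1 = b - 2 by ring]; ring
  have hint : ∀ c : ℝ, IntervalIntegrable (fun s => exp s * s ^ c) volume u x := fun c =>
    intervalIntegrable_exp_mul_rpow c hu hx
  have h := intervalIntegral.integral_eq_sub_of_hasDerivAt hderiv
    ((hint b).sub ((hint (b - 2)).const_mul (b * (b - 1))))
  rw [intervalIntegral.integral_sub (hint b) ((hint (b - 2)).const_mul _),
    intervalIntegral.integral_const_mul] at h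
  linarith

theorem Gamma_sub_integral_Ioo_exp_neg_mul_rpow {p x : ℝ} (hp : 0 < p) (hx : 0 ≤ x) :
    Gamma p - ∫ s in Ioo 0 x, exp (-s) * s ^ (p - 1) = ∫ s in Ioi x, exp (-s) * s ^ (p - 1) := by
  have hint := GammaIntegral_convergent hp
  rw [Gamma_eq_integral hp, ← Ioc_union_Ioi_eq_Ioi hx,
    setIntegral_union (Ioc_disjoint_Ioi le_rfl) measurableSet_Ioi
      (hint.mono_set Ioc_subset_Ioi_self) (hint.mono_set (Ioi_subset_Ioi hx)),
    integral_Ioc_eq_integral_Ioo]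
  ring

theorem integral_Ioo_exp_mul_rpow_eq_add {b u x : ℝ} (hb : -1 < b) (hu : 0 ≤ u) (hux : u ≤ x) :
    ∫ s in Ioo 0 x, exp s * s ^ b = (∫ s in 0..u, exp s * s ^ b) + ∫ s in u..x, exp s * s ^ b := by
  have hint : ∀ v w : ℝ, IntervalIntegrable (fun s => exp s * s ^ b) volume v w := fun _ _ =>
    (intervalIntegral.intervalIntegrable_rpow' hb).continuousOn_mul continuous_exp.continuousOn
  rw [intervalIntegral.integral_add_adjacent_intervals (hint _ _) (hint _ _),
    intervalIntegral.integral_of_le (hu.trans hux), integral_Ioc_eq_integral_Ioo]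

theorem integral_Ioi_exp_neg_mul_rpow_le {b x : ℝ} (hb : b ≤ 0) (hx : 0 < x) :
    ∫ s in Ioi x, exp (-s) * s ^ b ≤ x ^ b * exp (-x) := by
  have hexp : IntegrableOn (fun s => exp (-s)) (Ioi x) := by
    simpa only [neg_mul, one_mul] using exp_neg_integrableOn_Ioi x one_pos
  calc ∫ s in Ioi x, exp (-s) * s ^ b
      ≤ ∫ s in Ioi x, x ^ b * exp (-s) := by
        refine setIntegral_mono_on (integrableOn_exp_neg_mul_rpow_Ioi b hx) (hexp.const_mul _)
          measurableSet_Ioi fun s hs => ?_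
        rw [mul_comm (x ^ b)]
        exact mul_le_mul_of_nonneg_left (rpow_le_rpow_of_nonpos hx hs.le hb) (exp_pos _).le
    _ = x ^ b * exp (-x) := by rw [integral_const_mul, integral_exp_neg_Ioi]

theorem isBigO_exp_mul_integral_Ioi_exp_neg_mul_rpow {b : ℝ} (hb : b ≤ 0) :
    (fun x => exp x * ∫ s in Ioi x, exp (-s) * s ^ b) =O[atTop] (· ^ b) := by
  refine IsBigO.of_bound 1 ?_
  filter_upwards [eventually_gt_atTop 0] with x hx
  have hnonneg : 0 ≤ ∫ s in Ioi x, exp (-s) * s ^ b := setIntegral_nonneg measurableSet_Ioi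
    fun s hs => mul_nonneg (exp_pos _).le (rpow_nonneg (hx.trans hs).le _)
  rw [norm_of_nonneg (mul_nonneg (exp_pos x).le hnonneg), norm_of_nonneg (rpow_nonneg hx.le _),
    one_mul]
  calc exp x * ∫ s in Ioi x, exp (-s) * s ^ b ≤ exp x * (x ^ b * exp (-x)) :=
        mul_le_mul_of_nonneg_left (integral_Ioi_exp_neg_mul_rpow_le hb hx) (exp_pos x).le
    _ = x ^ b := by rw [mul_left_comm, ← exp_add, add_neg_cancel, exp_zero, mul_one]

theorem intervalIntegral_exp_mul_rpow_le {b x : ℝ} (hb : b ≤ 0) (hx : 2 ≤ x) :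
    ∫ s in (1 : ℝ)..x, exp s * s ^ b ≤ exp (x / 2) + exp x * (x / 2) ^ b := by
  have hx2 : 1 ≤ x / 2 := by linarith
  have hint := intervalIntegrable_exp_mul_rpow b (u := 1) (v := x / 2) one_pos (by linarith)
  have hint' := intervalIntegrable_exp_mul_rpow b (u := x / 2) (v := x) (by linarith) (by linarith)
  rw [← intervalIntegral.integral_add_adjacent_intervals hint hint']
  have hlow : ∫ s in (1 : ℝ)..x / 2, exp s * s ^ b ≤ exp (x / 2) :=
    calc ∫ s in (1 : ℝ)..x / 2, exp s * s ^ b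
        ≤ ∫ s in (1 : ℝ)..x / 2, exp s := by
          refine intervalIntegral.integral_mono_on hx2 hint (continuous_exp.intervalIntegrable _ _)
            fun s hs => ?_
          exact mul_le_of_le_one_right (exp_pos s).le (rpow_le_one_of_one_le_of_nonpos hs.1 hb)
      _ ≤ exp (x / 2) := by rw [integral_exp]; linarith [exp_pos 1]
  have hhigh : ∫ s in x / 2..x, exp s * s ^ b ≤ exp x * (x / 2) ^ b :=
    calc ∫ s in x / 2..x, exp s * s ^ b
        ≤ ∫ s in x / 2..x, exp s * (x / 2) ^ b := by
          refine intervalIntegral.integral_mono_on (by linarith) hint'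
            ((continuous_exp.intervalIntegrable _ _).mul_const _) fun s hs => ?_
          exact mul_le_mul_of_nonneg_left (rpow_le_rpow_of_nonpos (by linarith) hs.1 hb)
            (exp_pos s).le
      _ ≤ exp x * (x / 2) ^ b := by
          rw [intervalIntegral.integral_mul_const, integral_exp]
          exact mul_le_mul_of_nonneg_right (by linarith [exp_pos (x / 2)])
            (rpow_nonneg (by linarith) _)
  linarith

theorem isBigO_exp_neg_mul_intervalIntegral_exp_mul_rpow {b : ℝ} (hb : b ≤ 0) :
    (fun x => exp (-x) * ∫ s in (1 : ℝ)..x, exp s * s ^ b) =O[atTop] (· ^ b) := by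
  have hbound : (fun x => exp (-x) * ∫ s in (1 : ℝ)..x, exp s * s ^ b) =O[atTop]
      fun x => exp (-(1 / 2) * x) + (2 ^ b)⁻¹ * x ^ b := by
    refine IsBigO.of_bound 1 ?_
    filter_upwards [eventually_ge_atTop 2] with x hx
    have hnonneg : 0 ≤ ∫ s in (1 : ℝ)..x, exp s * s ^ b :=
      intervalIntegral.integral_nonneg (by linarith) fun s hs =>
        mul_nonneg (exp_pos s).le (rpow_nonneg (by linarith [hs.1]) _)
    rw [norm_of_nonneg (mul_nonneg (exp_pos _).le hnonneg),
      norm_of_nonneg (by positivity), one_mul]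
    calc exp (-x) * ∫ s in (1 : ℝ)..x, exp s * s ^ b
        ≤ exp (-x) * (exp (x / 2) + exp x * (x / 2) ^ b) :=
          mul_le_mul_of_nonneg_left (intervalIntegral_exp_mul_rpow_le hb hx) (exp_pos _).le
      _ = exp (-(1 / 2) * x) + (2 ^ b)⁻¹ * x ^ b := by
          rw [div_rpow (by linarith) zero_le_two, mul_add, ← exp_add, ← mul_assoc, ← exp_add,
            neg_add_cancel, exp_zero, one_mul]
          ring_nf
  exact hbound.trans ((isLittleO_exp_neg_mul_rpow_atTop (by norm_num) b).isBigO.add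
    (isBigO_const_mul_self _ _ _))

theorem isLittleO_rpow_rpow_atTop {p q : ℝ} (hpq : p < q) :
    (fun x : ℝ => x ^ p) =o[atTop] fun x => x ^ q := by
  refine (isLittleO_iff_tendsto' ?_).2 ?_
  · filter_upwards [eventually_gt_atTop 0] with x hx h
    exact absurd h (rpow_pos_of_pos hx _).ne'
  · refine (tendsto_rpow_neg_atTop (sub_pos.2 hpq)).congr' ?_
    filter_upwards [eventually_gt_atTop 0] with x hx
    rw [← rpow_sub hx, neg_sub]

noncomputable def fH (H x : ℝ) : ℝ :=
  exp (-x) * (Gamma (2 * H) - ∫ s in Ioo 0 x, exp s * s ^ (2 * H - 1)) +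
    exp x * (Gamma (2 * H) - ∫ s in Ioo 0 x, exp (-s) * s ^ (2 * H - 1))

theorem fH_sub_eq {H x : ℝ} (hH : 0 < H) (hx : 1 ≤ x) :
    fH H x - 2 * (2 * H - 1) * x ^ (2 * H - 2) =
      (Gamma (2 * H) - (∫ s in (0 : ℝ)..1, exp s * s ^ (2 * H - 1)) + exp 1 * (2 - 2 * H)) *
          exp (-x) +
        (2 * H - 1) * (2 * H - 2) * (exp x * (∫ s in Ioi x, exp (-s) * s ^ (2 * H - 3)) -
          exp (-x) * ∫ s in (1 : ℝ)..x, exp s * s ^ (2 * H - 3)) := by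
  have hx₀ : 0 < x := one_pos.trans_le hx
  rw [fH, integral_Ioo_exp_mul_rpow_eq_add (by linarith) zero_le_one hx,
    intervalIntegral_exp_mul_rpow _ one_pos hx₀,
    Gamma_sub_integral_Ioo_exp_neg_mul_rpow (by linarith) hx₀.le,
    integral_Ioi_exp_neg_mul_rpow _ hx₀, show 2 * H - 1 - 1 = 2 * H - 2 by ring,
    show 2 * H - 1 - 2 = 2 * H - 3 by ring]
  simp only [one_rpow]
  have hexp : exp (-x) * exp x = 1 := by rw [← exp_add, neg_add_cancel, exp_zero]
  linear_combination (2 * (2 * H - 1) * x ^ (2 * H - 2)) * hexp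

theorem isEquivalent_fH {H : ℝ} (hH₀ : 0 < H) (hH₁ : H ≤ 1) (hH : H ≠ 1 / 2) :
    fH H ~[atTop] fun x => 2 * (2 * H - 1) * x ^ (2 * H - 2) := by
  have hb : 2 * H - 3 ≤ 0 := by linarith
  have hK := (isLittleO_exp_neg_mul_rpow_atTop one_pos (2 * H - 2)).const_mul_left
    (Gamma (2 * H) - (∫ s in (0 : ℝ)..1, exp s * s ^ (2 * H - 1)) + exp 1 * (2 - 2 * H))
  have hJ := (((isBigO_exp_mul_integral_Ioi_exp_neg_mul_rpow hb).sub
    (isBigO_exp_neg_mul_intervalIntegral_exp_mul_rpow hb)).trans_isLittleO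
      (isLittleO_rpow_rpow_atTop (by linarith : 2 * H - 3 < 2 * H - 2))).const_mul_left
        ((2 * H - 1) * (2 * H - 2))
  refine ((hK.add hJ).const_mul_right (c := 2 * (2 * H - 1)) ?_).congr' ?_ (by rfl)
  · exact mul_ne_zero two_ne_zero (sub_ne_zero.2 (by contrapose! hH; linarith))
  · filter_upwards [eventually_ge_atTop 1] with x hx
    simp only [Pi.sub_apply, fH_sub_eq hH₀ hx, neg_one_mul]

theorem fH_asymptotics (H : ℝ) (hH : H ∈ Set.Ioc (0:ℝ) 1) (hne : H ≠ 1/2)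
    (f : ℝ → ℝ)
    (hf : ∀ x : ℝ, 0 < x → f x =
      Real.exp (-x) * (Real.Gamma (2*H) - ∫ s in Set.Ioo (0:ℝ) x, Real.exp s * s ^ (2*H-1)) +
      Real.exp x * (Real.Gamma (2*H) - ∫ s in Set.Ioo (0:ℝ) x, Real.exp (-s) * s ^ (2*H-1))) :
    Tendsto (fun x : ℝ => f x / (2*(2*H-1) * x ^ (2*H-2))) atTop (nhds 1) := by
  have hf_eq : fH H =ᶠ[atTop] f := by
    filter_upwards [eventually_gt_atTop 0] with x hx
    exact (hf x hx).symm
  have hne_zero : ∀ᶠ x in atTop, 2 * (2 * H - 1) * x ^ (2 * H - 2) ≠ 0 := by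
    filter_upwards [eventually_gt_atTop 0] with x hx
    exact mul_ne_zero (mul_ne_zero two_ne_zero (sub_ne_zero.2 (by contrapose! hne; linarith)))
      (rpow_pos_of_pos hx _).ne'
  exact (isEquivalent_iff_tendsto_one hne_zero).1
    ((isEquivalent_fH hH.1 hH.2 hne).congr_left hf_eq)
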